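/- For every integer N ≥ 2 and every real P > 0, there exists a unique φ ∈ [1, N] satisfying (1 + NPφ)^{N-1} = (1 + Pφ(N - φ))^N. -/

import Mathlib

/-!
Taking logarithms, the equation says that `g(φ) = (N-1) log(1 + NPφ) - N log(1 + Pφ(N-φ))`
vanishes. On `[1, N]` the derivative of `g` has the sign of `(2φ - 1) + Pφ(N(φ - 1) + φ) > 0`,
so `g` is strictly increasing; `g(N) > 0` is immediate and `g(1) < 0` is strict concavity of
`log` at `1 + (N-1)P = ((N-1)/N)(1 + NP) + 1/N`. The intermediate value theorem finishes.
-/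

open Real Set

lemma pow_eq_pow_iff_mul_log_eq {a b : ℝ} (ha : 0 < a) (hb : 0 < b) (m k : ℕ) :
    a ^ m = b ^ k ↔ m * log a = k * log b := by
  rw [← log_pow, ← log_pow]
  exact ⟨fun h ↦ by rw [h], log_injOn_pos (pow_pos ha m) (pow_pos hb k)⟩

/-- The logarithm of `(1 + nPφ)^(n-1) / (1 + Pφ(n-φ))^n`. -/
noncomputable def logGap (n P φ : ℝ) : ℝ :=
  (n - 1) * log (1 + n * P * φ) - n * log (1 + P * φ * (n - φ))

section logGap

variable {n P φ : ℝ}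

lemma one_add_mul_mul_pos (hn : 0 ≤ n) (hP : 0 ≤ P) (hφ : 0 ≤ φ) : 0 < 1 + n * P * φ := by
  positivity

lemma one_add_mul_mul_sub_pos (hP : 0 ≤ P) (hφ : φ ∈ Icc 0 n) : 0 < 1 + P * φ * (n - φ) :=
  add_pos_of_pos_of_nonneg one_pos (mul_nonneg (mul_nonneg hP hφ.1) (sub_nonneg.2 hφ.2))

lemma hasDerivAt_logGap (hA : 1 + n * P * φ ≠ 0) (hB : 1 + P * φ * (n - φ) ≠ 0) :
    HasDerivAt (logGap n P)
      (n * P * ((n - 1) * (1 + P * φ * (n - φ)) - (n - 2 * φ) * (1 + n * P * φ)) /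
        ((1 + n * P * φ) * (1 + P * φ * (n - φ)))) φ := by
  have hA' : HasDerivAt (fun x ↦ 1 + n * P * x) (n * P) φ :=
    ((hasDerivAt_id' φ).const_mul (n * P)).const_add 1 |>.congr_deriv (by ring)
  have hB' : HasDerivAt (fun x ↦ 1 + P * x * (n - x)) (P * (n - 2 * φ)) φ :=
    (((hasDerivAt_id' φ).const_mul P).mul ((hasDerivAt_id' φ).const_sub n)).const_add 1
      |>.congr_deriv (by ring)
  refine ((hA'.log hA).const_mul (n - 1)).sub ((hB'.log hB).const_mul n) |>.congr_deriv ?_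
  field_simp

lemma continuousOn_logGap (hn : 0 ≤ n) (hP : 0 ≤ P) : ContinuousOn (logGap n P) (Icc 0 n) :=
  fun _ hφ ↦ (hasDerivAt_logGap (one_add_mul_mul_pos hn hP hφ.1).ne'
    (one_add_mul_mul_sub_pos hP hφ).ne').continuousAt.continuousWithinAt

lemma strictMonoOn_logGap (hn : 0 < n) (hP : 0 < P) : StrictMonoOn (logGap n P) (Icc 1 n) := by
  refine strictMonoOn_of_deriv_pos (convex_Icc 1 n)
    ((continuousOn_logGap hn.le hP.le).mono (Icc_subset_Icc_left zero_le_one)) ?_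
  intro φ hφ
  obtain ⟨hφ1, hφn⟩ : 1 < φ ∧ φ < n := by rwa [interior_Icc] at hφ
  have hA : 0 < 1 + n * P * φ := one_add_mul_mul_pos hn.le hP.le (by linarith)
  have hB : 0 < 1 + P * φ * (n - φ) := one_add_mul_mul_sub_pos hP.le ⟨by linarith, hφn.le⟩
  have hnum : 0 < (n - 1) * (1 + P * φ * (n - φ)) - (n - 2 * φ) * (1 + n * P * φ) := by
    have : 0 < P * φ * (n * (φ - 1) + φ) :=
      mul_pos (mul_pos hP (by linarith)) (by nlinarith)
    nlinarith
  rw [(hasDerivAt_logGap hA.ne' hB.ne').deriv]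
  positivity

lemma logGap_one_neg (hn : 1 < n) (hP : 0 < P) : logGap n P 1 < 0 := by
  have hn0 : 0 < n := by linarith
  have hconc : (n - 1) / n * log (1 + n * P) + 1 / n * log 1
      < log ((n - 1) / n * (1 + n * P) + 1 / n * 1) :=
    strictConcaveOn_log_Ioi.2 (mem_Ioi.2 (by positivity)) (mem_Ioi.2 one_pos) (by nlinarith)
      (div_pos (sub_pos.2 hn) hn0) (by positivity) (by field_simp; ring)
  have hcomb : (n - 1) / n * (1 + n * P) + 1 / n * 1 = 1 + P * 1 * (n - 1) := by
    field_simp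
    ring
  rw [log_one, mul_zero, add_zero, hcomb, div_mul_eq_mul_div, div_lt_iff₀ hn0] at hconc
  rw [logGap, mul_one]
  linarith

lemma logGap_self_pos (hn : 1 < n) (hP : 0 < P) : 0 < logGap n P n := by
  rw [logGap, sub_self, mul_zero, add_zero, log_one, mul_zero, sub_zero]
  exact mul_pos (sub_pos.2 hn) (log_pos (by nlinarith [mul_pos hP (by linarith : 0 < n)]))

end logGap

theorem stmt_4 (N : ℕ) (hN : 2 ≤ N) (P : ℝ) (hP : 0 < P) :
    ∃! φ : ℝ, φ ∈ Set.Icc 1 (N : ℝ) ∧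
      (1 + (N : ℝ) * P * φ) ^ (N - 1) = (1 + P * φ * ((N : ℝ) - φ)) ^ N := by
  have hn : (1 : ℝ) < N := by exact_mod_cast hN
  have hequiv : ∀ φ ∈ Icc (1 : ℝ) N,
      (1 + N * P * φ) ^ (N - 1) = (1 + P * φ * (N - φ)) ^ N ↔ logGap N P φ = 0 := by
    intro φ hφ
    rw [pow_eq_pow_iff_mul_log_eq (one_add_mul_mul_pos (by positivity) hP.le (by linarith [hφ.1]))
      (one_add_mul_mul_sub_pos hP.le ⟨by linarith [hφ.1], hφ.2⟩),
      Nat.cast_sub (by omega), Nat.cast_one, logGap, sub_eq_zero]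
  obtain ⟨φ, hφ, hzero⟩ := intermediate_value_Icc hn.le
    ((continuousOn_logGap (by linarith) hP.le).mono (Icc_subset_Icc_left zero_le_one))
    ⟨(logGap_one_neg hn hP).le, (logGap_self_pos hn hP).le⟩
  refine ⟨φ, ⟨hφ, (hequiv φ hφ).2 hzero⟩, fun ψ ⟨hψ, hψeq⟩ ↦ ?_⟩
  exact (strictMonoOn_logGap (by linarith) hP).injOn hψ hφ
    (by rw [(hequiv ψ hψ).1 hψeq, hzero])
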